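/- arXiv:1906.08518 — 3 statements merged into one kernel-verified Lean document; each statement's English description precedes it below -/
import Mathlib

section
/- (Waldschmidt's upper bound) Let S be a nonempty finite set of distinct points in ℂⁿ and let |S| denote its cardinality. For every positive integer l one has Ω(S,l) ≤ (l + n − 1)·|S|^{1/n} − (n − 1). -/
open MvPolynomial Filter

/-- The iterated partial derivative `∂^α` acting on polynomials in `n` variables. -/
noncomputable def iterPDeriv (n : ℕ) (α : Fin n → ℕ) :
    Module.End ℂ (MvPolynomial (Fin n) ℂ) :=
  (List.finRange n).foldl
    (fun L i => ((MvPolynomial.pderiv i).toLinearMap ^ α i) * L) 1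

/-- `ord(P,p) ≥ l`: all partial derivatives of `P` of total order `< l` vanish at `p`. -/
def HasOrderAtLeast {n : ℕ} (P : MvPolynomial (Fin n) ℂ) (p : Fin n → ℂ) (l : ℕ) : Prop :=
  ∀ α : Fin n → ℕ, (∑ i, α i) < l → MvPolynomial.eval p (iterPDeriv n α P) = 0

/-- `Ω(S,l)`: minimal degree of a nonzero polynomial vanishing to order `≥ l` at each point of `S`. -/
noncomputable def Omega {n : ℕ} (S : Finset (Fin n → ℂ)) (l : ℕ) : ℕ :=
  sInf {d | ∃ P : MvPolynomial (Fin n) ℂ,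
    P ≠ 0 ∧ (∀ p ∈ S, HasOrderAtLeast P p l) ∧ P.totalDegree = d}


/-- The singular degree `Ω(S) := inf_{l ≥ 1} Ω(S,l)/l`. -/
noncomputable def singDeg {n : ℕ} (S : Finset (Fin n → ℂ)) : ℝ :=
  ⨅ l : ℕ+, (Omega S (l : ℕ) : ℝ) / (l : ℕ)

/-!
Polynomials of total degree `≤ d` in `n` variables form a space of dimension `C(d + n, n)`, while
vanishing to order `l` at the points of `S` imposes `|S| · C(l - 1 + n, n)` linear conditions, so a
nonzero such polynomial of degree `≤ d` exists once the first number exceeds the second. With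
`t = |S|^{1/n}` and `d = ⌊(l + n - 1) t⌋ + 1 - n`, this follows by comparing
`n! · C(d + n, n) = ∏_{i<n} (d + 1 + i)` with `n! · |S| · C(l - 1 + n, n) = ∏_{i<n} (l + i) t`
factor by factor.
-/

def sumLeEquivSumEq (n d : ℕ) :
    {f : Fin n → ℕ // ∑ i, f i ≤ d} ≃ {g : Fin (n + 1) → ℕ // ∑ i, g i = d} where
  toFun f := ⟨Fin.cons (d - ∑ i, f.1 i) f.1, by
    simpa [Fin.sum_univ_succ] using Nat.sub_add_cancel f.2⟩
  invFun g := ⟨Fin.tail g.1,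
    (Nat.le_add_left _ _).trans_eq ((Fin.sum_univ_succ g.1).symm.trans g.2)⟩
  left_inv f := by simp
  right_inv g := by
    have hg := g.2
    rw [Fin.sum_univ_succ] at hg
    ext i
    refine Fin.cases ?_ (fun _ => rfl) i
    simp [Fin.tail, ← hg]

noncomputable instance (n d : ℕ) : Fintype {f : Fin n → ℕ // ∑ i, f i ≤ d} :=
  Fintype.ofEquiv _ ((sumLeEquivSumEq n d).trans (Sym.equivNatSumOfFintype _ d).symm).symm

theorem card_sum_le_eq_choose (n d : ℕ) :
    Fintype.card {f : Fin n → ℕ // ∑ i, f i ≤ d} = (d + n).choose n := by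
  rw [Fintype.card_congr ((sumLeEquivSumEq n d).trans (Sym.equivNatSumOfFintype _ d).symm),
    Sym.card_sym_eq_choose, Fintype.card_fin, show n + 1 + d - 1 = n + d by omega, add_comm d n,
    Nat.choose_symm_add]

theorem finrank_restrictTotalDegree (R : Type*) [CommRing R] [StrongRankCondition R] (n d : ℕ) :
    Module.finrank R (restrictTotalDegree (Fin n) R d) = (d + n).choose n := by
  let B : Module.Basis {s : Fin n →₀ ℕ | (s.sum fun _ e => e) ≤ d} R
      (restrictTotalDegree (Fin n) R d) := basisRestrictSupport R _
  rw [Module.finrank_eq_nat_card_basis B, ← card_sum_le_eq_choose,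
    ← Nat.card_eq_fintype_card]
  exact Nat.card_congr (Finsupp.equivFunOnFinite.subtypeEquiv fun s => by
    simp [Finsupp.sum_fintype])

noncomputable def jetEval {n : ℕ} (S : Finset (Fin n → ℂ)) (m : ℕ) :
    MvPolynomial (Fin n) ℂ →ₗ[ℂ] (S × {α : Fin n → ℕ // ∑ i, α i ≤ m}) → ℂ :=
  LinearMap.pi fun q => (aeval (q.1 : Fin n → ℂ)).toLinearMap ∘ₗ iterPDeriv n q.2.1

theorem hasOrderAtLeast_of_jetEval_eq_zero {n : ℕ} {S : Finset (Fin n → ℂ)} {m : ℕ}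
    {P : MvPolynomial (Fin n) ℂ} (hP : jetEval S m P = 0) {p : Fin n → ℂ} (hp : p ∈ S) :
    HasOrderAtLeast P p (m + 1) :=
  fun α hα => congrFun hP (⟨p, hp⟩, ⟨α, Nat.le_of_lt_succ hα⟩)

theorem exists_ne_zero_hasOrderAtLeast {n : ℕ} (S : Finset (Fin n → ℂ)) (m d : ℕ)
    (h : S.card * (m + n).choose n < (d + n).choose n) :
    ∃ P : MvPolynomial (Fin n) ℂ,
      P ≠ 0 ∧ (∀ p ∈ S, HasOrderAtLeast P p (m + 1)) ∧ P.totalDegree ≤ d := by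
  have hker :
      LinearMap.ker ((jetEval S m).domRestrict (restrictTotalDegree (Fin n) ℂ d)) ≠ ⊥ :=
    LinearMap.ker_ne_bot_of_finrank_lt <| by
      rwa [finrank_restrictTotalDegree, Module.finrank_fintype_fun_eq_card, Fintype.card_prod,
        Fintype.card_coe, card_sum_le_eq_choose]
  obtain ⟨⟨P, hPdeg⟩, hPker, hP0⟩ := (Submodule.ne_bot_iff _).mp hker
  exact ⟨P, fun h0 => hP0 (Subtype.ext h0),
    fun p hp => hasOrderAtLeast_of_jetEval_eq_zero hPker hp,
    (mem_restrictTotalDegree _ _ _).mp hPdeg⟩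

theorem omega_le_of_card_mul_choose_lt {n : ℕ} {S : Finset (Fin n → ℂ)} {m d : ℕ}
    (h : S.card * (m + n).choose n < (d + n).choose n) : Omega S (m + 1) ≤ d := by
  obtain ⟨P, hP0, hPord, hPdeg⟩ := exists_ne_zero_hasOrderAtLeast S m d h
  exact le_trans (Nat.sInf_le ⟨P, hP0, hPord, rfl⟩) hPdeg

theorem pow_mul_prod_lt_prod {n : ℕ} (hn : n ≠ 0) {a t y : ℝ} (ha : 0 < a) (ht : 1 ≤ t)
    (h : (a + n - 1) * t < y + n) :
    t ^ n * ∏ i ∈ Finset.range n, (a + i) < ∏ i ∈ Finset.range n, (y + 1 + i) := by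
  rw [show t ^ n = ∏ _i ∈ Finset.range n, t by simp, ← Finset.prod_mul_distrib]
  refine Finset.prod_lt_prod_of_nonempty (fun i _ => by positivity) (fun i hi => ?_)
    (Finset.nonempty_range_iff.mpr hn)
  have hi : (i : ℝ) + 1 ≤ n := by exact_mod_cast Finset.mem_range.mp hi
  -- `(a + i) t = (a + n - 1) t - (n - 1 - i) t ≤ (a + n - 1) t - (n - 1 - i)` as `t ≥ 1`
  nlinarith

theorem card_mul_choose_lt_choose {n s m d : ℕ} (hn : n ≠ 0) (hs : s ≠ 0)
    (h : (m + n) * (s : ℝ) ^ (n : ℝ)⁻¹ < d + n) :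
    s * (m + n).choose n < (d + n).choose n := by
  set t : ℝ := (s : ℝ) ^ (n : ℝ)⁻¹
  have ht : 1 ≤ t := Real.one_le_rpow (by exact_mod_cast Nat.one_le_iff_ne_zero.mpr hs)
    (by positivity)
  have htn : t ^ n = s := by
    rw [← Real.rpow_natCast, ← Real.rpow_mul (by positivity),
      inv_mul_cancel₀ (by exact_mod_cast hn), Real.rpow_one]
  have hasc : s * (m + 1).ascFactorial n < (d + 1).ascFactorial n := by
    have hprod := pow_mul_prod_lt_prod hn (a := m + 1) (y := d) (by positivity) ht (by linarith)
    rw [htn] at hprod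
    rw [Nat.ascFactorial_eq_prod_range, Nat.ascFactorial_eq_prod_range]
    exact_mod_cast hprod
  rw [Nat.ascFactorial_eq_factorial_mul_choose, Nat.ascFactorial_eq_factorial_mul_choose,
    mul_left_comm] at hasc
  exact Nat.lt_of_mul_lt_mul_left hasc

theorem waldschmidt_upper_bound {n : ℕ} (hn : 0 < n) (S : Finset (Fin n → ℂ)) (hS : S.Nonempty)
    (l : ℕ) (hl : 0 < l) :
    (Omega S l : ℝ) ≤ ((l : ℝ) + n - 1) * (S.card : ℝ) ^ ((n : ℝ)⁻¹) - ((n : ℝ) - 1) := by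
  obtain ⟨m, rfl⟩ : ∃ m, l = m + 1 := ⟨l - 1, by omega⟩
  set t : ℝ := (S.card : ℝ) ^ (n : ℝ)⁻¹
  set x : ℝ := (m + n) * t
  have hxn : (n : ℝ) ≤ x := by
    have ht : 1 ≤ t := Real.one_le_rpow (by exact_mod_cast hS.card_pos) (by positivity)
    nlinarith [(m.cast_nonneg : (0 : ℝ) ≤ m)]
  set d := ⌊x⌋₊ + 1 - n
  have hd : (d : ℝ) = ⌊x⌋₊ + 1 - n := by
    rw [Nat.cast_sub (by exact_mod_cast (Nat.le_floor hxn).trans (Nat.le_succ _))]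
    push_cast; ring
  have hΩ : Omega S (m + 1) ≤ d := omega_le_of_card_mul_choose_lt <|
    card_mul_choose_lt_choose hn.ne' hS.card_pos.ne' (by linarith [Nat.lt_floor_add_one x])
  calc (Omega S (m + 1) : ℝ) ≤ d := by exact_mod_cast hΩ
    _ ≤ x + 1 - n := by linarith [Nat.floor_le (by linarith : (0 : ℝ) ≤ x)]
    _ = _ := by push_cast; ring
end

section
/- Let Q ∈ ℂ[z₁,…,zₙ] be a nonzero polynomial and let 0 < ϱ ≤ R. Then ln‖Q‖_ϱ − ln‖Q‖_R ≥ (deg Q)·ln(ϱ/R); equivalently ‖Q‖_R ≤ (R/ϱ)^{deg Q}·‖Q‖_ϱ. -/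
/-!
Restrict `Q` to the complex line through `0` and a point `z` with `‖z‖ ≤ R`: this gives a
one-variable polynomial `f` of degree at most `deg Q` bounded by `‖Q‖_ϱ` on the disc of radius
`ϱ / R`. The reflected polynomial `s ↦ s ^ deg Q · f (1 / s)` is entire, so the maximum modulus
principle on the disc of radius `R / ϱ` gives `|f 1| ≤ (R / ϱ) ^ deg Q · ‖Q‖_ϱ`, and `f 1 = Q z`.
-/

open MvPolynomial

/-- The sup-norm `‖Q‖_ϱ` of a polynomial on the closed Euclidean ball `B̄(0,ϱ)` in `ℂⁿ`. -/
noncomputable def polyNorm {n : ℕ} (Q : MvPolynomial (Fin n) ℂ) (ϱ : ℝ) : ℝ :=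
  sSup ((fun z : EuclideanSpace ℂ (Fin n) =>
    ‖MvPolynomial.eval (fun i => z i) Q‖) '' Metric.closedBall 0 ϱ)

namespace Polynomial

theorem eval_reflect_inv_mul_pow {K : Type*} [Field K] {f : K[X]} {N : ℕ}
    (hf : f.natDegree ≤ N) {x : K} (hx : x ≠ 0) :
    (reflect N f).eval x⁻¹ * x ^ N = f.eval x := by
  have : Invertible x := invertibleOfNonzero hx
  simpa only [eval, invOf_eq_inv] using eval₂_reflect_mul_pow (RingHom.id K) x N f hf

theorem norm_eval_le_div_pow_mul {f : ℂ[X]} {N : ℕ} (hf : f.natDegree ≤ N) {r M : ℝ}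
    (hr : 0 < r) (hM : ∀ t : ℂ, ‖t‖ ≤ r → ‖f.eval t‖ ≤ M) {w : ℂ} (hw : r ≤ ‖w‖) :
    ‖f.eval w‖ ≤ (‖w‖ / r) ^ N * M := by
  -- maximum modulus for `reflect N f`, i.e. for `s ↦ s ^ N f (1 / s)` on the disc of radius `1 / r`
  have hr' : r⁻¹ ≠ 0 := inv_ne_zero hr.ne'
  have hw0 : w ≠ 0 := norm_pos_iff.mp (hr.trans_le hw)
  have hfrontier :
      ∀ s ∈ frontier (Metric.ball (0 : ℂ) r⁻¹), ‖(reflect N f).eval s‖ ≤ M / r ^ N := by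
    intro s hs
    rw [frontier_ball 0 hr', mem_sphere_zero_iff_norm] at hs
    have hs0 : s ≠ 0 := norm_pos_iff.mp (by rw [hs]; positivity)
    have hreflect := eval_reflect_inv_mul_pow hf (inv_ne_zero hs0)
    rw [inv_inv] at hreflect
    rw [le_div_iff₀ (by positivity)]
    calc ‖(reflect N f).eval s‖ * r ^ N = ‖f.eval s⁻¹‖ := by
          rw [← hreflect, norm_mul, norm_pow, norm_inv, hs, inv_inv]
      _ ≤ M := hM _ (by rw [norm_inv, hs, inv_inv])
  have hmem : w⁻¹ ∈ closure (Metric.ball (0 : ℂ) r⁻¹) := by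
    rw [closure_ball 0 hr', mem_closedBall_zero_iff, norm_inv]
    exact inv_anti₀ hr hw
  have hmax := Complex.norm_le_of_forall_mem_frontier_norm_le Metric.isBounded_ball
    (reflect N f).differentiable.diffContOnCl hfrontier hmem
  calc ‖f.eval w‖ = ‖(reflect N f).eval w⁻¹‖ * ‖w‖ ^ N := by
        rw [← eval_reflect_inv_mul_pow hf hw0, norm_mul, norm_pow]
    _ ≤ M / r ^ N * ‖w‖ ^ N := by gcongr
    _ = (‖w‖ / r) ^ N * M := by rw [div_pow]; ring

end Polynomial

namespace MvPolynomial

variable {σ R : Type*} [CommRing R]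

noncomputable def restrictLine (Q : MvPolynomial σ R) (z : σ → R) : Polynomial R :=
  aeval (fun i => Polynomial.C (z i) * Polynomial.X) Q

theorem eval_restrictLine (Q : MvPolynomial σ R) (z : σ → R) (t : R) :
    (restrictLine Q z).eval t = eval (t • z) Q := by
  unfold restrictLine
  induction Q using MvPolynomial.induction_on with
  | C a => simp
  | add p q hp hq => simp only [map_add, Polynomial.eval_add, hp, hq]
  | mul_X p i hp =>
    simp only [map_mul, aeval_X, Polynomial.eval_mul, hp, eval_X, Polynomial.eval_C,
      Polynomial.eval_X, Pi.smul_apply, smul_eq_mul]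
    ring

theorem natDegree_restrictLine_le (Q : MvPolynomial σ R) (z : σ → R) :
    (restrictLine Q z).natDegree ≤ Q.totalDegree := by
  simpa [restrictLine] using aeval_natDegree_le Q le_rfl _ fun i =>
    (Polynomial.natDegree_C_mul_le _ _).trans Polynomial.natDegree_X_le

end MvPolynomial

section polyNorm

variable {n : ℕ} (Q : MvPolynomial (Fin n) ℂ)

theorem continuous_norm_eval_euclidean :
    Continuous fun z : EuclideanSpace ℂ (Fin n) => ‖eval (fun i => z i) Q‖ :=
  ((continuous_eval Q).comp (PiLp.continuous_ofLp 2 _)).norm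

theorem norm_eval_le_polyNorm {ϱ : ℝ} {z : EuclideanSpace ℂ (Fin n)} (hz : ‖z‖ ≤ ϱ) :
    ‖eval (fun i => z i) Q‖ ≤ polyNorm Q ϱ :=
  le_csSup ((isCompact_closedBall _ _).image (continuous_norm_eval_euclidean Q)).bddAbove
    ⟨z, mem_closedBall_zero_iff.mpr hz, rfl⟩

theorem polyNorm_le {ϱ M : ℝ} (hϱ : 0 ≤ ϱ)
    (h : ∀ z : EuclideanSpace ℂ (Fin n), ‖z‖ ≤ ϱ → ‖eval (fun i => z i) Q‖ ≤ M) :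
    polyNorm Q ϱ ≤ M :=
  csSup_le ⟨_, 0, Metric.mem_closedBall_self hϱ, rfl⟩ <| by
    rintro _ ⟨z, hz, rfl⟩
    exact h z (mem_closedBall_zero_iff.mp hz)

theorem norm_eval_le_pow_mul_polyNorm {ϱ R : ℝ} (hϱ : 0 < ϱ) (hϱR : ϱ ≤ R)
    {z : EuclideanSpace ℂ (Fin n)} (hz : ‖z‖ ≤ R) :
    ‖eval (fun i => z i) Q‖ ≤ (R / ϱ) ^ Q.totalDegree * polyNorm Q ϱ := by
  have hR : 0 < R := hϱ.trans_le hϱR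
  have hline :
      ∀ t : ℂ, ‖t‖ ≤ ϱ / R → ‖(restrictLine Q (fun i => z i)).eval t‖ ≤ polyNorm Q ϱ := by
    intro t ht
    rw [eval_restrictLine]
    refine norm_eval_le_polyNorm Q (z := t • z) ?_
    calc ‖t • z‖ = ‖t‖ * ‖z‖ := norm_smul t z
      _ ≤ ϱ / R * R := by gcongr
      _ = ϱ := div_mul_cancel₀ ϱ hR.ne'
  have h1 := Polynomial.norm_eval_le_div_pow_mul (natDegree_restrictLine_le Q _)
    (div_pos hϱ hR) hline (w := 1) (by rw [norm_one]; exact div_le_one_of_le₀ hϱR hR.le)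
  rwa [eval_restrictLine, one_smul, norm_one, one_div_div] at h1

theorem polyNorm_le_pow_mul_polyNorm {ϱ R : ℝ} (hϱ : 0 < ϱ) (hϱR : ϱ ≤ R) :
    polyNorm Q R ≤ (R / ϱ) ^ Q.totalDegree * polyNorm Q ϱ :=
  polyNorm_le Q (hϱ.le.trans hϱR) fun _ => norm_eval_le_pow_mul_polyNorm Q hϱ hϱR

-- By the growth bound, a polynomial vanishing on a ball vanishes everywhere.
theorem polyNorm_pos {Q : MvPolynomial (Fin n) ℂ} (hQ : Q ≠ 0) {ϱ : ℝ} (hϱ : 0 < ϱ) :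
    0 < polyNorm Q ϱ := by
  by_contra! h
  refine hQ (MvPolynomial.funext fun x => ?_)
  have hx := norm_eval_le_pow_mul_polyNorm Q hϱ (le_max_left ϱ ‖WithLp.toLp 2 x‖)
    (le_max_right _ _)
  have hbound : (max ϱ ‖WithLp.toLp 2 x‖ / ϱ) ^ Q.totalDegree * polyNorm Q ϱ ≤ 0 :=
    mul_nonpos_of_nonneg_of_nonpos (by positivity) h
  simpa using hx.trans hbound

end polyNorm

theorem polyNorm_growth_general {n : ℕ} (Q : MvPolynomial (Fin n) ℂ) (hQ : Q ≠ 0)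
    (ϱ R : ℝ) (hϱ : 0 < ϱ) (hϱR : ϱ ≤ R) :
    Real.log (polyNorm Q ϱ) - Real.log (polyNorm Q R) ≥
      (Q.totalDegree : ℝ) * Real.log (ϱ / R) ∧
    polyNorm Q R ≤ (R / ϱ) ^ Q.totalDegree * polyNorm Q ϱ := by
  have hR : 0 < R := hϱ.trans_le hϱR
  have hgrowth := polyNorm_le_pow_mul_polyNorm Q hϱ hϱR
  refine ⟨?_, hgrowth⟩
  have hlog := Real.log_le_log (polyNorm_pos hQ (hϱ.trans_le hϱR)) hgrowth
  rw [Real.log_mul (by positivity) (polyNorm_pos hQ hϱ).ne', Real.log_pow,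
    Real.log_div hR.ne' hϱ.ne'] at hlog
  rw [Real.log_div hϱ.ne' hR.ne']
  linarith

theorem polyNorm_growth {n : ℕ} (hn : 0 < n) (Q : MvPolynomial (Fin n) ℂ) (hQ : Q ≠ 0)
    (ϱ R : ℝ) (hϱ : 0 < ϱ) (hϱR : ϱ ≤ R) :
    Real.log (polyNorm Q ϱ) - Real.log (polyNorm Q R) ≥
      (Q.totalDegree : ℝ) * Real.log (ϱ / R) ∧
    polyNorm Q R ≤ (R / ϱ) ^ Q.totalDegree * polyNorm Q ϱ :=
  polyNorm_growth_general Q hQ ϱ R hϱ hϱR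
end

section
/- Let S be a finite set of r distinct points in ℂⁿ and let l be a positive integer. If d is a sufficiently large integer, then the linear map φ : ℂ_d[z] → ℂ^{m_l}, where m_l = r·C(l−1+n, n), defined by φ(P) = (∂^α P(s))_{|α| ≤ l−1, s ∈ S} (the list of all partial derivatives of P of total order at most l−1 evaluated at all points of S) is surjective. -/
open MvPolynomial

/-- The jet evaluation map `φ : ℂ_d[z] → ℂ^{m_l}`,
`φ(P) = (∂^α P(s))_{|α| ≤ l−1, s ∈ S}`. -/
noncomputable def jetMap (n d l : ℕ) (S : Finset (Fin n → ℂ))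
    (P : MvPolynomial.restrictTotalDegree (Fin n) ℂ d) :
    ({p // p ∈ S} × {α : Fin n →₀ ℕ // (α.sum fun _ k => k) ≤ l - 1}) → ℂ :=
  fun q => MvPolynomial.eval (q.1 : Fin n → ℂ)
    (iterPDeriv n (⇑q.2.1) (P : MvPolynomial (Fin n) ℂ))

/-!
Taylor's formula `∂^β P(t) = β! · coeff_β P(t + z)` turns the jet map into reading off the
Taylor coefficients of order `< l` at the points of `S`. Fix `s ∈ S` and choose, for every other
point `t ∈ S`, a coordinate `j t` in which `t` differs from `s`. Then
`W = ∏_{t ≠ s} (z_{j t} - t_{j t})^l` vanishes to order `l` at every `t ≠ s` but not at `s`, so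
for `|β| < l` the jets of `W · (z - s)^β`, a polynomial of degree `< l·|S|`, vanish away from `s`
and at `s` are supported on the multi-indices `γ ≥ β`, with a nonzero entry at `β` itself. These
jets form a triangular family with respect to `|β|`, hence span.
-/

theorem Submodule.eq_top_of_triangular {K ι β : Type*} [DivisionRing K] [Finite ι] [Preorder β]
    (M : Submodule K (ι → K)) (h : ι → β)
    (hM : ∀ i, ∃ v ∈ M, v i ≠ 0 ∧ ∀ j ≠ i, v j ≠ 0 → h i < h j) : M = ⊤ := by
  classical
  have := Fintype.ofFinite ι
  have hwf : WellFounded fun i j => h j < h i :=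
    Finite.wellFounded_of_trans_of_irrefl (InvImage (· > ·) h)
  have hsingle : ∀ i, Pi.single i (1 : K) ∈ M := by
    intro i
    induction i using hwf.induction with
    | _ i ih =>
      obtain ⟨v, hvM, hvi, hv⟩ := hM i
      have hrest : ∑ j ∈ Finset.univ.erase i, v j • Pi.single j (1 : K) ∈ M := by
        refine M.sum_mem fun j hj => ?_
        by_cases hvj : v j = 0
        · simp [hvj]
        · exact M.smul_mem _ (ih j (hv j (Finset.ne_of_mem_erase hj) hvj))
      have hsplit :
          v i • Pi.single i (1 : K) + ∑ j ∈ Finset.univ.erase i, v j • Pi.single j 1 = v := by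
        rw [Finset.add_sum_erase _ (fun j => v j • Pi.single j (1 : K)) (Finset.mem_univ i)]
        simp_rw [← Pi.single_smul', smul_eq_mul, mul_one]
        exact Finset.univ_sum_single v
      have hdiag : v i • Pi.single i (1 : K) ∈ M := by
        rw [eq_sub_of_add_eq hsplit]
        exact M.sub_mem hvM hrest
      simpa [smul_smul, inv_mul_cancel₀ hvi] using M.smul_mem (v i)⁻¹ hdiag
  rw [eq_top_iff, ← (Pi.basisFun K ι).span_eq, Submodule.span_le]
  rintro _ ⟨i, rfl⟩
  simpa using hsingle i

lemma List.foldl_mul_left_eq {M ι : Type*} [Monoid M] (f : ι → M) (L : List ι) (A : M) :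
    L.foldl (fun E i => f i * E) A = (L.reverse.map f).prod * A := by
  induction L generalizing A with
  | nil => simp
  | cons a L ih => simp [ih, mul_assoc]

lemma Finsupp.degree_strictMono {σ : Type*} : StrictMono (Finsupp.degree : (σ →₀ ℕ) → ℕ) := by
  intro β γ h
  obtain ⟨δ, rfl⟩ := exists_add_of_le h.le
  rw [map_add, lt_add_iff_pos_right, pos_iff_ne_zero, Ne, Finsupp.degree_eq_zero_iff]
  rintro rfl
  simp at h

namespace MvPolynomial

variable {σ R : Type*} [CommRing R]

noncomputable def taylor (v : σ → R) : MvPolynomial σ R →ₐ[R] MvPolynomial σ R :=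
  aeval fun i => X i + C (v i)

@[simp] lemma taylor_X (v : σ → R) (i : σ) : taylor v (X i) = X i + C (v i) :=
  aeval_X _ _

@[simp] lemma taylor_C (v : σ → R) (a : R) : taylor v (C a) = C a :=
  (taylor v).commutes a

lemma taylor_X_sub_C (v : σ → R) (i : σ) : taylor v (X i - C (v i)) = X i := by
  simp

lemma constantCoeff_taylor (v : σ → R) (p : MvPolynomial σ R) :
    constantCoeff (taylor v p) = eval v p := by
  induction p using MvPolynomial.induction_on with
  | C a => simp
  | add p q hp hq => simp [hp, hq]
  | mul_X p i hp => simp [hp]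

lemma pderiv_taylor (v : σ → R) (i : σ) (p : MvPolynomial σ R) :
    pderiv i (taylor v p) = taylor v (pderiv i p) := by
  classical
  induction p using MvPolynomial.induction_on with
  | C a => simp
  | add p q hp hq => simp [hp, hq]
  | mul_X p j hp =>
    simp only [map_mul, pderiv_mul, hp, taylor_X, map_add, pderiv_X, pderiv_C, add_zero]
    by_cases h : i = j <;> simp [h]

lemma pderiv_pow_monomial (i : σ) (k : ℕ) (β : σ →₀ ℕ) (c : R) :
    ((pderiv i).toLinearMap ^ k) (monomial β c)
      = monomial (β - Finsupp.single i k) (c * (β i).descFactorial k) := by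
  induction k with
  | zero => simp
  | succ k ih =>
    rw [pow_succ', Module.End.mul_apply, ih, Derivation.coeFn_coe, pderiv_monomial,
      tsub_tsub, ← Finsupp.single_add, Nat.descFactorial_succ]
    simp only [Finsupp.coe_tsub, Pi.sub_apply, Finsupp.single_eq_same]
    congr 1
    push_cast
    ring

lemma list_prod_pderiv_pow_monomial (α : σ → ℕ) (L : List σ) (hL : L.Nodup)
    (β : σ →₀ ℕ) (c : R) :
    (L.map fun i => (pderiv i).toLinearMap ^ α i).prod (monomial β c)
      = monomial (β - (L.map fun i => Finsupp.single i (α i)).sum)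
          (c * (L.map fun i => ((β i).descFactorial (α i) : R)).prod) := by
  induction L with
  | nil => simp
  | cons a L ih =>
    obtain ⟨ha, hL⟩ := List.nodup_cons.mp hL
    have hβa : (β - (L.map fun i => Finsupp.single i (α i)).sum) a = β a := by
      rw [Finsupp.coe_tsub, Pi.sub_apply, ← Finsupp.applyAddHom_apply a (List.sum _),
        map_list_sum, List.sum_eq_zero, Nat.sub_zero]
      simp only [List.map_map, List.mem_map, Function.comp_apply, Finsupp.applyAddHom_apply]
      rintro _ ⟨i, hi, rfl⟩
      exact Finsupp.single_eq_of_ne (fun h => ha (h ▸ hi))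
    rw [List.map_cons, List.prod_cons, Module.End.mul_apply, ih hL, pderiv_pow_monomial, hβa,
      tsub_tsub, List.map_cons, List.sum_cons, add_comm, List.map_cons, List.prod_cons]
    ring_nf

lemma totalDegree_X_sub_C_le (i : σ) (a : R) : (X i - C a : MvPolynomial σ R).totalDegree ≤ 1 :=
  (totalDegree_sub_C_le _ _).trans <| (totalDegree_monomial_le _ _).trans_eq (by simp)

lemma totalDegree_prod_X_sub_C_pow_le (s : σ → R) (β : σ →₀ ℕ) :
    (β.prod fun i e => (X i - C (s i)) ^ e).totalDegree ≤ β.degree := by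
  refine (totalDegree_finsetProd _ _).trans (Finset.sum_le_sum fun i _ => ?_)
  exact (totalDegree_pow _ _).trans
    (by simpa using Nat.mul_le_mul_left (β i) (totalDegree_X_sub_C_le i (s i)))

lemma taylor_prod_X_sub_C_pow (s : σ → R) (β : σ →₀ ℕ) :
    taylor s (β.prod fun i e => (X i - C (s i)) ^ e) = monomial β 1 := by
  simp [map_finsuppProd, monomial_eq]

noncomputable def separator (m : ℕ) (E : Finset (σ → R)) (j : E → σ) : MvPolynomial σ R :=
  ∏ t : E, (X (j t) - C ((t : σ → R) (j t))) ^ m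

lemma totalDegree_separator_le (m : ℕ) (E : Finset (σ → R)) (j : E → σ) :
    (separator m E j).totalDegree ≤ m * E.card := by
  refine (totalDegree_finsetProd _ _).trans ?_
  rw [← Finset.card_attach, Finset.card_eq_sum_ones, Finset.mul_sum, mul_one]
  exact Finset.sum_le_sum fun t _ => (totalDegree_pow _ _).trans
    (by simpa using Nat.mul_le_mul_left m (totalDegree_X_sub_C_le (j t) (t.1 (j t))))

lemma coeff_X_pow_mul_of_lt {i : σ} {m : ℕ} {γ : σ →₀ ℕ} (h : γ i < m)
    (q : MvPolynomial σ R) :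
    coeff γ (X i ^ m * q) = 0 := by
  rw [X_pow_eq_monomial, coeff_monomial_mul', if_neg (by simpa [Finsupp.single_le_iff] using h)]

lemma totalDegree_separator_mul_prod_le (m : ℕ) (E : Finset (σ → R)) (j : E → σ) (s : σ → R)
    (β : σ →₀ ℕ) :
    (separator m E j * β.prod fun i e => (X i - C (s i)) ^ e).totalDegree
      ≤ m * E.card + β.degree :=
  (totalDegree_mul _ _).trans
    (add_le_add (totalDegree_separator_le _ _ _) (totalDegree_prod_X_sub_C_pow_le _ _))

lemma coeff_taylor_separator_mul_of_lt {m : ℕ} {E : Finset (σ → R)} (j : E → σ) (t : E)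
    {γ : σ →₀ ℕ} (hγ : γ (j t) < m) (q : MvPolynomial σ R) :
    coeff γ (taylor t (separator m E j * q)) = 0 := by
  classical
  rw [separator, ← Finset.mul_prod_erase _ _ (Finset.mem_univ t), mul_assoc, map_mul, map_pow,
    taylor_X_sub_C]
  exact coeff_X_pow_mul_of_lt hγ _

lemma constantCoeff_taylor_separator_ne_zero [IsDomain R] (m : ℕ) {E : Finset (σ → R)}
    {j : E → σ} {s : σ → R} (hs : ∀ t : E, s (j t) ≠ (t : σ → R) (j t)) :
    constantCoeff (taylor s (separator m E j)) ≠ 0 := by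
  rw [constantCoeff_taylor, separator, map_prod]
  exact Finset.prod_ne_zero_iff.mpr fun t _ => by
    simpa using pow_ne_zero m (sub_ne_zero.mpr (hs t))

lemma coeff_taylor_separator_mul_prod (m : ℕ) (E : Finset (σ → R)) (j : E → σ) (s : σ → R)
    (β γ : σ →₀ ℕ) :
    coeff γ (taylor s (separator m E j * β.prod fun i e => (X i - C (s i)) ^ e))
      = if β ≤ γ then coeff (γ - β) (taylor s (separator m E j)) else 0 := by
  rw [map_mul, taylor_prod_X_sub_C_pow, coeff_mul_monomial', mul_one]

end MvPolynomial

section Jets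

variable {n : ℕ}

lemma iterPDeriv_eq_prod (α : Fin n → ℕ) :
    iterPDeriv n α
      = ((List.finRange n).reverse.map fun i => (pderiv i).toLinearMap ^ α i).prod := by
  rw [iterPDeriv, List.foldl_mul_left_eq, mul_one]

lemma iterPDeriv_taylor (α : Fin n → ℕ) (v : Fin n → ℂ) (p : MvPolynomial (Fin n) ℂ) :
    iterPDeriv n α (taylor v p) = taylor v (iterPDeriv n α p) := by
  have hcomm : Commute (taylor v).toLinearMap (iterPDeriv n α) := by
    rw [iterPDeriv_eq_prod]
    refine Commute.list_prod_right _ _ fun D hD => ?_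
    obtain ⟨i, -, rfl⟩ := List.mem_map.mp hD
    exact Commute.pow_right (LinearMap.ext fun p => (pderiv_taylor v i p).symm) _
  exact (LinearMap.congr_fun hcomm p).symm

lemma iterPDeriv_monomial (α : Fin n → ℕ) (β : Fin n →₀ ℕ) (c : ℂ) :
    iterPDeriv n α (monomial β c)
      = monomial (β - ∑ i, Finsupp.single i (α i))
          (c * ∏ i, ((β i).descFactorial (α i) : ℂ)) := by
  rw [iterPDeriv_eq_prod,
    list_prod_pderiv_pow_monomial _ _ (List.nodup_reverse.mpr (List.nodup_finRange n)),
    Fin.sum_univ_def, Fin.prod_univ_def, List.map_reverse, List.map_reverse, List.sum_reverse,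
    List.prod_reverse]

lemma constantCoeff_iterPDeriv (β : Fin n →₀ ℕ) (p : MvPolynomial (Fin n) ℂ) :
    constantCoeff (iterPDeriv n β p) = (∏ i, ((β i).factorial : ℂ)) * coeff β p := by
  induction p using MvPolynomial.induction_on' with
  | add p q hp hq => rw [map_add, map_add, hp, hq, coeff_add, mul_add]
  | monomial γ c =>
    rw [iterPDeriv_monomial, Finsupp.univ_sum_single, constantCoeff_monomial, coeff_monomial]
    by_cases hγ : γ = β
    · subst hγ
      simp [Nat.descFactorial_self, mul_comm]
    rw [if_neg hγ, mul_zero, ite_eq_right_iff, tsub_eq_zero_iff_le]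
    intro hle
    obtain ⟨i, hi⟩ := (Finsupp.lt_def.mp (lt_of_le_of_ne hle hγ)).2
    exact mul_eq_zero_of_right _ (Finset.prod_eq_zero (Finset.mem_univ i)
      (by simp [Nat.descFactorial_eq_zero_iff_lt.mpr hi]))

lemma eval_iterPDeriv (t : Fin n → ℂ) (β : Fin n →₀ ℕ) (p : MvPolynomial (Fin n) ℂ) :
    eval t (iterPDeriv n β p) = (∏ i, ((β i).factorial : ℂ)) * coeff β (taylor t p) := by
  rw [← constantCoeff_taylor, ← iterPDeriv_taylor, constantCoeff_iterPDeriv]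

instance (k : ℕ) : Finite {α : Fin n →₀ ℕ // (α.sum fun _ m => m) ≤ k} :=
  (Finsupp.finite_of_degree_le k).to_subtype

noncomputable def jet (k : ℕ) (S : Finset (Fin n → ℂ)) : MvPolynomial (Fin n) ℂ →ₗ[ℂ]
    ({p // p ∈ S} × {α : Fin n →₀ ℕ // (α.sum fun _ m => m) ≤ k}) → ℂ :=
  LinearMap.pi fun q => (aeval (q.1 : Fin n → ℂ)).toLinearMap ∘ₗ iterPDeriv n q.2.1

lemma jet_apply (k : ℕ) (S : Finset (Fin n → ℂ)) (p : MvPolynomial (Fin n) ℂ)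
    (q : {p // p ∈ S} × {α : Fin n →₀ ℕ // (α.sum fun _ m => m) ≤ k}) :
    jet k S p q
      = (∏ i, ((q.2.1 i).factorial : ℂ)) * coeff q.2.1 (taylor (q.1 : Fin n → ℂ) p) := by
  rw [← eval_iterPDeriv]
  simp [jet]

theorem map_jet_restrictTotalDegree_eq_top (k : ℕ) (S : Finset (Fin n → ℂ)) :
    (restrictTotalDegree (Fin n) ℂ ((k + 1) * S.card)).map (jet k S) = ⊤ := by
  refine Submodule.eq_top_of_triangular _ (fun q => q.2.1.degree) ?_
  rintro ⟨⟨s, hs⟩, β, hβ⟩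
  choose j hj using fun t : S.erase s => Function.ne_iff.mp (Finset.ne_of_mem_erase t.2).symm
  set P := separator (k + 1) (S.erase s) j * β.prod fun i e => (X i - C (s i)) ^ e
  have hP : P ∈ restrictTotalDegree (Fin n) ℂ ((k + 1) * S.card) := by
    rw [mem_restrictTotalDegree]
    calc P.totalDegree ≤ (k + 1) * (S.erase s).card + β.degree :=
          totalDegree_separator_mul_prod_le _ _ _ _ _
      _ ≤ (k + 1) * S.card := by
          rw [← Finset.card_erase_add_one hs, mul_add_one]
          exact add_le_add_right (hβ.trans k.le_succ) _
  have hfact : ∀ γ : Fin n →₀ ℕ, (∏ i, ((γ i).factorial : ℂ)) ≠ 0 := fun γ =>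
    Finset.prod_ne_zero_iff.mpr fun i _ => Nat.cast_ne_zero.mpr (Nat.factorial_ne_zero _)
  refine ⟨jet k S P, ⟨P, hP, rfl⟩, ?_, ?_⟩
  · rw [jet_apply, coeff_taylor_separator_mul_prod, if_pos le_rfl, tsub_self]
    exact mul_ne_zero (hfact β) (constantCoeff_taylor_separator_ne_zero _ hj)
  rintro ⟨⟨t, ht⟩, γ, hγ⟩ hne hv
  rw [jet_apply] at hv
  by_cases hts : t = s
  · subst hts
    rw [coeff_taylor_separator_mul_prod] at hv
    have hle : β ≤ γ := by
      by_contra h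
      simp [h] at hv
    exact Finsupp.degree_strictMono (lt_of_le_of_ne hle fun h => hne (by subst h; rfl))
  · have hγt : γ (j ⟨t, Finset.mem_erase.mpr ⟨hts, ht⟩⟩) < k + 1 :=
      Nat.lt_succ_of_le ((Finsupp.le_degree _ γ).trans hγ)
    exact absurd (mul_eq_zero_of_right _ (coeff_taylor_separator_mul_of_lt j _ hγt _)) hv

end Jets

theorem jetMap_surjective_general {n : ℕ} (S : Finset (Fin n → ℂ)) (l : ℕ) :
    ∃ D : ℕ, ∀ d : ℕ, D ≤ d → Function.Surjective (jetMap n d l S) := by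
  -- `l - 1` truncates: for `l = 0` the jets are just the values on `S`.
  refine ⟨(l - 1 + 1) * S.card, fun d hd c => ?_⟩
  obtain ⟨P, hP, rfl⟩ : c ∈ (restrictTotalDegree (Fin n) ℂ _).map (jet (l - 1) S) := by
    rw [map_jet_restrictTotalDegree_eq_top]
    exact Submodule.mem_top
  have hPd : P.totalDegree ≤ d := ((mem_restrictTotalDegree _ _ _).1 hP).trans hd
  exact ⟨⟨P, (mem_restrictTotalDegree _ _ _).2 hPd⟩, rfl⟩

theorem jetMap_surjective {n : ℕ} (hn : 0 < n) (r : ℕ) (S : Finset (Fin n → ℂ))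
    (hcard : S.card = r) (l : ℕ) (hl : 0 < l) :
    ∃ D : ℕ, ∀ d : ℕ, D ≤ d → Function.Surjective (jetMap n d l S) :=
  jetMap_surjective_general S l
end
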